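/- arXiv:0712.1896 — 5 statements merged into one kernel-verified Lean document; each statement's English description precedes it below -/
import Mathlib

section
/- For every bounded operator A on h⊗H and all u, v ∈ h, one has the operator inequalities 0 ≤ A(u,v)*·A(u,v) ≤ ‖u‖²·(A*A)(v,v) in the ordering of self-adjoint bounded operators on H. -/
/-!
Writing `L_u : ξ ↦ u ⊗ ξ`, which is bounded with `‖L_u‖ ≤ ‖u‖`, the operator `A(u,v)` factors
as `L_u* A L_v`, and `(A*A)(v,v) = (A L_v)* (A L_v)`. So `A(u,v)* A(u,v) = Y* K* K Y` with
`Y = A L_v` and `K = L_u*`; it is positive, and conjugating `K* K ≤ ‖K‖² • 1 ≤ ‖u‖² • 1`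
by `Y` gives the upper bound.
-/

open scoped InnerProductSpace ComplexInnerProductSpace
open ContinuousLinearMap

namespace ContinuousLinearMap

variable {𝕜 E E' F G : Type*} [RCLike 𝕜]
  [NormedAddCommGroup E] [InnerProductSpace 𝕜 E] [NormedAddCommGroup E'] [InnerProductSpace 𝕜 E']
  [NormedAddCommGroup F] [InnerProductSpace 𝕜 F] [NormedAddCommGroup G] [InnerProductSpace 𝕜 G]

theorem adjoint_comp_self_le_sq_smul_one [CompleteSpace E] [CompleteSpace F] {K : E →L[𝕜] F} {c : ℝ} (hK : ‖K‖ ≤ c) :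
    adjoint K ∘L K ≤ ((c : 𝕜) ^ 2) • 1 := by
  rw [le_def, isPositive_def']
  refine ⟨?_, fun x => ?_⟩
  · have hc : IsSelfAdjoint ((c : 𝕜) ^ 2) := IsSelfAdjoint.pow (RCLike.conj_ofReal c) 2
    exact (hc.smul (.one _)).sub (isPositive_adjoint_comp_self K).isSelfAdjoint
  · have hKx : ‖K x‖ ≤ c * ‖x‖ := (K.le_opNorm x).trans (by gcongr)
    have hquad : reApplyInnerSelf (((c : 𝕜) ^ 2) • 1 - adjoint K ∘L K) x
        = c ^ 2 * ‖x‖ ^ 2 - ‖K x‖ ^ 2 := by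
      simp [reApplyInnerSelf, inner_sub_left, inner_smul_left, adjoint_inner_left]
    rw [hquad, sub_nonneg, ← mul_pow]
    exact pow_le_pow_left₀ (norm_nonneg _) hKx 2

theorem adjoint_comp_self_comp_le_sq_smul [CompleteSpace E] [CompleteSpace F] [CompleteSpace G]
    {K : E →L[𝕜] F} {c : ℝ} (hK : ‖K‖ ≤ c)
    (Y : G →L[𝕜] E) :
    adjoint (K ∘L Y) ∘L (K ∘L Y) ≤ ((c : 𝕜) ^ 2) • (adjoint Y ∘L Y) := by
  rw [le_def]
  convert ((le_def _ _).1 (adjoint_comp_self_le_sq_smul_one hK)).adjoint_conj Y using 1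
  simp [adjoint_comp, comp_sub, sub_comp, comp_assoc, one_def, id_comp]

theorem eq_adjoint_comp_comp_of_inner_eq [CompleteSpace F] [CompleteSpace E']
    {B : G →L[𝕜] F} {L : F →L[𝕜] E'} {A : E →L[𝕜] E'}
    {M : G →L[𝕜] E} (hB : ∀ ξ₁ ξ₂, ⟪ξ₁, B ξ₂⟫_𝕜 = ⟪L ξ₁, A (M ξ₂)⟫_𝕜) :
    B = adjoint L ∘L A ∘L M :=
  ext fun ξ₂ => ext_inner_left 𝕜 fun ξ₁ => by simp [hB, adjoint_inner_right]

end ContinuousLinearMap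

section TensorEmbedding

variable {𝕜 h H E : Type*} [RCLike 𝕜]
  [NormedAddCommGroup h] [InnerProductSpace 𝕜 h]
  [NormedAddCommGroup H] [InnerProductSpace 𝕜 H]
  [NormedAddCommGroup E] [InnerProductSpace 𝕜 E]
  {tmul : h →ₗ[𝕜] H →ₗ[𝕜] E}

theorem norm_tmul (htmul : ∀ (u v : h) (ξ ζ : H), ⟪tmul u ξ, tmul v ζ⟫_𝕜 = ⟪u, v⟫_𝕜 * ⟪ξ, ζ⟫_𝕜)
    (u : h) (ξ : H) : ‖tmul u ξ‖ = ‖u‖ * ‖ξ‖ := by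
  have hsq : ‖tmul u ξ‖ ^ 2 = (‖u‖ * ‖ξ‖) ^ 2 := by
    have := htmul u u ξ ξ
    simp only [inner_self_eq_norm_sq_to_K] at this
    rw [mul_pow]
    exact_mod_cast this
  exact (sq_eq_sq₀ (norm_nonneg _) (by positivity)).1 hsq

noncomputable def tmulCLM
    (htmul : ∀ (u v : h) (ξ ζ : H), ⟪tmul u ξ, tmul v ζ⟫_𝕜 = ⟪u, v⟫_𝕜 * ⟪ξ, ζ⟫_𝕜) (u : h) :
    H →L[𝕜] E :=
  (tmul u).mkContinuous ‖u‖ fun ξ => (norm_tmul htmul u ξ).le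

theorem norm_tmulCLM_le
    (htmul : ∀ (u v : h) (ξ ζ : H), ⟪tmul u ξ, tmul v ζ⟫_𝕜 = ⟪u, v⟫_𝕜 * ⟪ξ, ζ⟫_𝕜) (u : h) :
    ‖tmulCLM htmul u‖ ≤ ‖u‖ :=
  LinearMap.mkContinuous_norm_le _ (norm_nonneg u) _

end TensorEmbedding

theorem stmt3_general
    {h H E : Type*}
    [NormedAddCommGroup h] [InnerProductSpace ℂ h]
    [NormedAddCommGroup H] [InnerProductSpace ℂ H] [CompleteSpace H]
    [NormedAddCommGroup E] [InnerProductSpace ℂ E] [CompleteSpace E]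
    (tmul : h →ₗ[ℂ] H →ₗ[ℂ] E)
    (htmul : ∀ (u v : h) (ξ ζ : H), ⟪tmul u ξ, tmul v ζ⟫ = ⟪u, v⟫ * ⟪ξ, ζ⟫)
    (opAt : (E →L[ℂ] E) → h → h → (H →L[ℂ] H))
    (hopAt : ∀ (A : E →L[ℂ] E) (u v : h) (ξ₁ ξ₂ : H),
      ⟪ξ₁, opAt A u v ξ₂⟫ = ⟪tmul u ξ₁, A (tmul v ξ₂)⟫)
    (A : E →L[ℂ] E) (u v : h) :
    (adjoint (opAt A u v) * opAt A u v).IsPositive ∧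
    (((‖u‖ : ℂ) ^ 2) • opAt (adjoint A * A) v v
      - adjoint (opAt A u v) * opAt A u v).IsPositive := by
  set L := tmulCLM htmul
  have hT : opAt A u v = adjoint (L u) ∘L A ∘L L v :=
    eq_adjoint_comp_comp_of_inner_eq (hopAt A u v)
  have hS : opAt (adjoint A * A) v v = adjoint (A ∘L L v) ∘L (A ∘L L v) := by
    rw [eq_adjoint_comp_comp_of_inner_eq (L := L v) (M := L v) (hopAt (adjoint A * A) v v), adjoint_comp, mul_def]
    simp only [comp_assoc]
  have hK : ‖adjoint (L u)‖ ≤ ‖u‖ := (adjoint.norm_map _).trans_le (norm_tmulCLM_le htmul u)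
  rw [hT, hS]
  exact ⟨isPositive_adjoint_comp_self _, adjoint_comp_self_comp_le_sq_smul hK _⟩

theorem stmt3
    {h H E : Type*}
    [NormedAddCommGroup h] [InnerProductSpace ℂ h] [CompleteSpace h]
    [TopologicalSpace.SeparableSpace h]
    [NormedAddCommGroup H] [InnerProductSpace ℂ H] [CompleteSpace H]
    [TopologicalSpace.SeparableSpace H]
    [NormedAddCommGroup E] [InnerProductSpace ℂ E] [CompleteSpace E]
    (tmul : h →ₗ[ℂ] H →ₗ[ℂ] E)
    (htmul : ∀ (u v : h) (ξ ζ : H), ⟪tmul u ξ, tmul v ζ⟫ = ⟪u, v⟫ * ⟪ξ, ζ⟫)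
    (hdense : (Submodule.span ℂ (Set.range fun p : h × H => tmul p.1 p.2)).topologicalClosure = ⊤)
    (opAt : (E →L[ℂ] E) → h → h → (H →L[ℂ] H))
    (hopAt : ∀ (A : E →L[ℂ] E) (u v : h) (ξ₁ ξ₂ : H),
      ⟪ξ₁, opAt A u v ξ₂⟫ = ⟪tmul u ξ₁, A (tmul v ξ₂)⟫)
    (A : E →L[ℂ] E) (u v : h) :
    (adjoint (opAt A u v) * opAt A u v).IsPositive ∧
    (((‖u‖ : ℂ) ^ 2) • opAt (adjoint A * A) v v
      - adjoint (opAt A u v) * opAt A u v).IsPositive :=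
  stmt3_general tmul htmul opAt hopAt A u v
end

section
/- Let A be a bounded operator on h⊗H, n ≥ 1, ε = (ε₁,…,ε_n) ∈ {0,1}ⁿ and 1 ≤ m ≤ n. For all product vectors u = u₁⊗⋯⊗u_n and v = v₁⊗⋯⊗v_n in h^{⊗n}: (A^{(n,ε₁)}·A^{(n,ε₂)}⋯A^{(n,ε_m)})(u,v) = (∏_{i=1}^m A^{(ε_i)}(u_i,v_i)) · ∏_{i=m+1}^n ⟨u_i,v_i⟩ in B(H), the operator product taken in the displayed order. In particular, A^{(ε)}(u,v) = A^{(ε₁)}(u₁,v₁)·A^{(ε₂)}(u₂,v₂)⋯A^{(ε_n)}(u_n,v_n). -/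
/-!
Everything is determined by matrix elements between product vectors, and the formula is proved by
induction on the number of factors, splitting off the last one, `A^{(n,k)}`. Fix `v` and the slot
`k`. Since `⟪v[k:=a] ⊗ η, v[k:=b] ⊗ ζ⟫ = c ⟪a ⊗ η, b ⊗ ζ⟫` with `c = ∏_{i ≠ k} ‖v_i‖²`, the
assignment `a ⊗ η ↦ v[k:=a] ⊗ η` extends to a bounded operator `j : h ⊗ H → h^{⊗n} ⊗ H`, and
`A^{(n,k)} (v ⊗ ζ) = j (A^{(ε_k)} (v_k ⊗ ζ))`. The vectors `j (a ⊗ η)` are again product vectors, so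
the induction hypothesis applies to them, and by density and continuity to all of `j (h ⊗ H)`.
-/

open scoped ComplexInnerProductSpace
open ContinuousLinearMap

section General

variable {X Y Z : Type*} [NormedAddCommGroup X] [InnerProductSpace ℂ X]
  [NormedAddCommGroup Y] [InnerProductSpace ℂ Y] [NormedAddCommGroup Z] [InnerProductSpace ℂ Z]

theorem ext_inner_left_of_dense_span {s : Set X}
    (hs : (Submodule.span ℂ s).topologicalClosure = ⊤) {x y : X}
    (h : ∀ z ∈ s, ⟪z, x⟫ = ⟪z, y⟫) : x = y := by
  suffices innerSL ℂ x = innerSL ℂ y from innerSL_inj.mp this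
  refine ContinuousLinearMap.ext_on (Submodule.dense_iff_topologicalClosure_eq_top.mpr hs)
    fun z hz => ?_
  simp only [innerSL_apply_apply]
  rw [← inner_conj_symm, h z hz, inner_conj_symm]

theorem exists_continuousLinearMap_apply_eq_of_inner_eq [CompleteSpace Y] {ι : Type*}
    {f : ι → X} {g : ι → Y} {c : ℝ} (hf : (Submodule.span ℂ (Set.range f)).topologicalClosure = ⊤)
    (hfg : ∀ i j, ⟪g i, g j⟫ = c * ⟪f i, f j⟫) :
    ∃ T : X →L[ℂ] Y, ∀ i, T (f i) = g i := by
  set Lf := Finsupp.linearCombination ℂ f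
  set Lg := Finsupp.linearCombination ℂ g
  have hgram : ∀ a b, ⟪Lg a, Lg b⟫ = c * ⟪Lf a, Lf b⟫ := by
    intro a b
    induction a using Finsupp.induction_linear with
    | zero => simp
    | add a₁ a₂ h₁ h₂ => simp only [map_add, inner_add_left, h₁, h₂]; ring
    | single i r =>
      induction b using Finsupp.induction_linear with
      | zero => simp
      | add b₁ b₂ h₁ h₂ => simp only [map_add, inner_add_right, h₁, h₂]; ring
      | single j s =>
        simp only [Lf, Lg, Finsupp.linearCombination_single, inner_smul_left, inner_smul_right, hfg]
        ring
  have hnorm : ∀ a, ‖Lg a‖ ≤ √c * ‖Lf a‖ := by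
    intro a
    have hsq : ‖Lg a‖ ^ 2 = c * ‖Lf a‖ ^ 2 := by
      have := congrArg Complex.re (hgram a a)
      simpa [inner_self_eq_norm_sq_to_K, ← Complex.ofReal_pow] using this
    rw [← Real.sqrt_sq (norm_nonneg (Lg a)), hsq, Real.sqrt_mul' c (sq_nonneg _),
      Real.sqrt_sq (norm_nonneg _)]
  have hdense : DenseRange Lf := by
    rw [DenseRange, ← LinearMap.coe_range, Finsupp.range_linearCombination]
    exact Submodule.dense_iff_topologicalClosure_eq_top.mpr hf
  refine ⟨Lg.extendOfNorm Lf, fun i => ?_⟩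
  have := LinearMap.extendOfNorm_eq hdense ⟨_, hnorm⟩ (Finsupp.single i 1)
  simpa [Lf, Lg] using this

theorem norm_apply_apply_eq_of_inner_eq (B : X →ₗ[ℂ] Y →ₗ[ℂ] Z)
    (hB : ∀ x x' y y', ⟪B x y, B x' y'⟫ = ⟪x, x'⟫ * ⟪y, y'⟫) (x : X) (y : Y) :
    ‖B x y‖ = ‖x‖ * ‖y‖ := by
  have hsq : ‖B x y‖ ^ 2 = (‖x‖ * ‖y‖) ^ 2 := by
    have := congrArg Complex.re (hB x x y y)
    simp only [inner_self_eq_norm_sq_to_K] at this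
    rw [mul_pow]; exact_mod_cast this
  exact (pow_left_inj₀ (norm_nonneg _) (by positivity) two_ne_zero).mp hsq

theorem topologicalClosure_span_range_comp_left_eq_top (B : X →ₗ[ℂ] Y →ₗ[ℂ] Z)
    (hB : ∀ x x' y y', ⟪B x y, B x' y'⟫ = ⟪x, x'⟫ * ⟪y, y'⟫) {ι : Type*} {g : ι → X}
    (hg : (Submodule.span ℂ (Set.range g)).topologicalClosure = ⊤)
    (hBdense : (Submodule.span ℂ (Set.range fun p : X × Y => B p.1 p.2)).topologicalClosure = ⊤) :
    (Submodule.span ℂ (Set.range fun p : ι × Y => B (g p.1) p.2)).topologicalClosure = ⊤ := by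
  set S := Submodule.span ℂ (Set.range fun p : ι × Y => B (g p.1) p.2)
  refine eq_top_iff.mpr (hBdense ▸ ?_)
  refine Submodule.topologicalClosure_minimal _ (Submodule.span_le.mpr ?_)
    S.isClosed_topologicalClosure
  rintro _ ⟨⟨x, y⟩, rfl⟩
  let By : X →L[ℂ] Z := (B.flip y).mkContinuous ‖y‖ fun x => by
    simp [norm_apply_apply_eq_of_inner_eq B hB, mul_comm]
  have hspan : Submodule.span ℂ (Set.range g) ≤ S.topologicalClosure.comap By.toLinearMap :=
    Submodule.span_le.mpr <| by
      rintro _ ⟨i, rfl⟩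
      exact S.le_topologicalClosure (Submodule.subset_span ⟨(i, y), rfl⟩)
  have hclosed : IsClosed (S.topologicalClosure.comap By.toLinearMap : Set X) :=
    S.isClosed_topologicalClosure.preimage By.continuous
  have := Submodule.topologicalClosure_minimal _ hspan hclosed
  rw [hg] at this
  exact this (Submodule.mem_top (x := x))

theorem Finset.prod_inner_update_right {ι : Type*} [DecidableEq ι] {s : Finset ι} {k : ι}
    (hk : k ∈ s) (u v : ι → X) (a : X) :
    ∏ i ∈ s, ⟪u i, Function.update v k a i⟫ = ⟪u k, a⟫ * ∏ i ∈ s.erase k, ⟪u i, v i⟫ := by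
  rw [← s.mul_prod_erase _ hk, Function.update_self]
  congr 1
  exact Finset.prod_congr rfl fun i hi => by rw [Function.update_of_ne (Finset.ne_of_mem_erase hi)]

end General

section Ampliation

variable {h H E K F : Type*}
  [NormedAddCommGroup h] [InnerProductSpace ℂ h]
  [NormedAddCommGroup H] [InnerProductSpace ℂ H]
  [NormedAddCommGroup E] [InnerProductSpace ℂ E]
  [NormedAddCommGroup K] [InnerProductSpace ℂ K]
  [NormedAddCommGroup F] [InnerProductSpace ℂ F]
  {tmul : h →ₗ[ℂ] H →ₗ[ℂ] E} {n : ℕ} {tmuln : (Fin n → h) → K} {tmulF : K →ₗ[ℂ] H →ₗ[ℂ] F}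

/-- `T` is the ampliation `B^{(n,k)}` of `B`, acting in the `k`-th tensor factor of `h^{⊗n}`,
recorded through its matrix elements between product vectors. -/
def IsAmpliationAt (tmul : h →ₗ[ℂ] H →ₗ[ℂ] E) (tmuln : (Fin n → h) → K)
    (tmulF : K →ₗ[ℂ] H →ₗ[ℂ] F) (k : Fin n) (B : E →L[ℂ] E) (T : F →L[ℂ] F) : Prop :=
  ∀ (x y : Fin n → h) (ξ ζ : H), ⟪tmulF (tmuln x) ξ, T (tmulF (tmuln y) ζ)⟫
    = ⟪tmul (x k) ξ, B (tmul (y k) ζ)⟫ * ∏ i ∈ Finset.univ.erase k, ⟪x i, y i⟫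

theorem exists_slot_embedding [CompleteSpace F]
    (htmul : ∀ (u v : h) (ξ ζ : H), ⟪tmul u ξ, tmul v ζ⟫ = ⟪u, v⟫ * ⟪ξ, ζ⟫)
    (hdenseE : (Submodule.span ℂ (Set.range fun p : h × H => tmul p.1 p.2)).topologicalClosure = ⊤)
    (htmuln : ∀ u v : Fin n → h, ⟪tmuln u, tmuln v⟫ = ∏ i, ⟪u i, v i⟫)
    (htmulF : ∀ (x y : K) (ξ ζ : H), ⟪tmulF x ξ, tmulF y ζ⟫ = ⟪x, y⟫ * ⟪ξ, ζ⟫)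
    (v : Fin n → h) (k : Fin n) :
    ∃ j : E →L[ℂ] F, ∀ a η, j (tmul a η) = tmulF (tmuln (Function.update v k a)) η := by
  suffices ∃ j : E →L[ℂ] F, ∀ p : h × H, j (tmul p.1 p.2)
      = tmulF (tmuln (Function.update v k p.1)) p.2 from
    this.imp fun j hj a η => hj (a, η)
  refine exists_continuousLinearMap_apply_eq_of_inner_eq
    (c := ∏ i ∈ Finset.univ.erase k, ‖v i‖ ^ 2) hdenseE ?_
  rintro ⟨a, η⟩ ⟨b, ζ⟩
  have hv : ∀ i ∈ Finset.univ.erase k, ⟪Function.update v k a i, v i⟫ = ((‖v i‖ ^ 2 : ℝ) : ℂ) := by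
    intro i hi
    rw [Function.update_of_ne (Finset.ne_of_mem_erase hi), inner_self_eq_norm_sq_to_K]
    push_cast; rfl
  simp only [htmulF, htmuln, htmul, Finset.prod_inner_update_right (Finset.mem_univ k),
    Function.update_self, Finset.prod_congr rfl hv]
  push_cast
  ring

theorem inner_slot_embedding
    (htmul : ∀ (u v : h) (ξ ζ : H), ⟪tmul u ξ, tmul v ζ⟫ = ⟪u, v⟫ * ⟪ξ, ζ⟫)
    (hdenseE : (Submodule.span ℂ (Set.range fun p : h × H => tmul p.1 p.2)).topologicalClosure = ⊤)
    (htmuln : ∀ u v : Fin n → h, ⟪tmuln u, tmuln v⟫ = ∏ i, ⟪u i, v i⟫)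
    (htmulF : ∀ (x y : K) (ξ ζ : H), ⟪tmulF x ξ, tmulF y ζ⟫ = ⟪x, y⟫ * ⟪ξ, ζ⟫)
    {v : Fin n → h} {k : Fin n} {j : E →L[ℂ] F}
    (hj : ∀ a η, j (tmul a η) = tmulF (tmuln (Function.update v k a)) η)
    (y : Fin n → h) (ξ : H) (w : E) :
    ⟪tmulF (tmuln y) ξ, j w⟫ = (∏ i ∈ Finset.univ.erase k, ⟪y i, v i⟫) * ⟪tmul (y k) ξ, w⟫ := by
  suffices (innerSL ℂ (tmulF (tmuln y) ξ)).comp j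
      = (∏ i ∈ Finset.univ.erase k, ⟪y i, v i⟫) • innerSL ℂ (tmul (y k) ξ) from
    congr($this w)
  refine ContinuousLinearMap.ext_on (Submodule.dense_iff_topologicalClosure_eq_top.mpr hdenseE) ?_
  rintro _ ⟨⟨a, η⟩, rfl⟩
  simp only [comp_apply, innerSL_apply_apply, smul_apply, smul_eq_mul, hj, htmulF, htmuln, htmul,
    Finset.prod_inner_update_right (Finset.mem_univ k)]
  ring

theorem IsAmpliationAt.apply_eq
    (htmul : ∀ (u v : h) (ξ ζ : H), ⟪tmul u ξ, tmul v ζ⟫ = ⟪u, v⟫ * ⟪ξ, ζ⟫)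
    (hdenseE : (Submodule.span ℂ (Set.range fun p : h × H => tmul p.1 p.2)).topologicalClosure = ⊤)
    (htmuln : ∀ u v : Fin n → h, ⟪tmuln u, tmuln v⟫ = ∏ i, ⟪u i, v i⟫)
    (hdenseK : (Submodule.span ℂ (Set.range tmuln)).topologicalClosure = ⊤)
    (htmulF : ∀ (x y : K) (ξ ζ : H), ⟪tmulF x ξ, tmulF y ζ⟫ = ⟪x, y⟫ * ⟪ξ, ζ⟫)
    (hdenseF : (Submodule.span ℂ (Set.range fun p : K × H => tmulF p.1 p.2)).topologicalClosure = ⊤)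
    {k : Fin n} {B : E →L[ℂ] E} {T : F →L[ℂ] F} (hT : IsAmpliationAt tmul tmuln tmulF k B T)
    {v : Fin n → h} {j : E →L[ℂ] F}
    (hj : ∀ a η, j (tmul a η) = tmulF (tmuln (Function.update v k a)) η) (ζ : H) :
    T (tmulF (tmuln v) ζ) = j (B (tmul (v k) ζ)) := by
  refine ext_inner_left_of_dense_span
    (topologicalClosure_span_range_comp_left_eq_top tmulF htmulF hdenseK hdenseF) ?_
  rintro _ ⟨⟨y, ξ⟩, rfl⟩
  rw [hT, inner_slot_embedding htmul hdenseE htmuln htmulF hj, mul_comm]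

theorem inner_list_prod_ampliation [CompleteSpace H] [CompleteSpace F]
    (htmul : ∀ (u v : h) (ξ ζ : H), ⟪tmul u ξ, tmul v ζ⟫ = ⟪u, v⟫ * ⟪ξ, ζ⟫)
    (hdenseE : (Submodule.span ℂ (Set.range fun p : h × H => tmul p.1 p.2)).topologicalClosure = ⊤)
    {opAtE : (E →L[ℂ] E) → h → h → (H →L[ℂ] H)}
    (hopAtE : ∀ (T : E →L[ℂ] E) (u v : h) (ξ₁ ξ₂ : H),
      ⟪ξ₁, opAtE T u v ξ₂⟫ = ⟪tmul u ξ₁, T (tmul v ξ₂)⟫)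
    (htmuln : ∀ u v : Fin n → h, ⟪tmuln u, tmuln v⟫ = ∏ i, ⟪u i, v i⟫)
    (hdenseK : (Submodule.span ℂ (Set.range tmuln)).topologicalClosure = ⊤)
    (htmulF : ∀ (x y : K) (ξ ζ : H), ⟪tmulF x ξ, tmulF y ζ⟫ = ⟪x, y⟫ * ⟪ξ, ζ⟫)
    (hdenseF : (Submodule.span ℂ (Set.range fun p : K × H => tmulF p.1 p.2)).topologicalClosure = ⊤)
    {B : Fin n → E →L[ℂ] E} {Aamp : Fin n → F →L[ℂ] F}
    (hAamp : ∀ k, IsAmpliationAt tmul tmuln tmulF k (B k) (Aamp k))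
    {t : List (Fin n)} (ht : t.Nodup) (u v : Fin n → h) (ξ ζ : H) :
    ⟪tmulF (tmuln u) ξ, (t.map Aamp).prod (tmulF (tmuln v) ζ)⟫
      = (∏ i ∈ Finset.univ.filter (· ∉ t), ⟪u i, v i⟫)
        * ⟪ξ, (t.map fun k => opAtE (B k) (u k) (v k)).prod ζ⟫ := by
  induction t using List.reverseRecOn generalizing v ζ with
  | nil => simp [htmulF, htmuln]
  | append_singleton t k ih =>
    obtain ⟨htnd, -, hdisj⟩ := List.nodup_append.mp ht
    have hkt : k ∉ t := fun hk => hdisj k hk k (List.mem_singleton_self k) rfl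
    obtain ⟨j, hj⟩ := exists_slot_embedding htmul hdenseE htmuln htmulF v k
    set Q := (t.map fun k => opAtE (B k) (u k) (v k)).prod
    set C := ∏ i ∈ Finset.univ.filter (· ∉ t ++ [k]), ⟪u i, v i⟫
    have hfilter : (Finset.univ.filter (· ∉ t)).erase k = Finset.univ.filter (· ∉ t ++ [k]) := by
      ext i; simp [and_comm]
    have hQ : ∀ a, (t.map fun k' => opAtE (B k') (u k') (Function.update v k a k')).prod = Q :=
      fun a => congrArg List.prod <| List.map_congr_left fun k' hk' => by
        rw [Function.update_of_ne (ne_of_mem_of_not_mem hk' hkt)]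
    have hPj : ∀ w, ⟪tmulF (tmuln u) ξ, (t.map Aamp).prod (j w)⟫
        = C * ⟪tmul (u k) (adjoint Q ξ), w⟫ := by
      suffices (innerSL ℂ (tmulF (tmuln u) ξ)).comp ((t.map Aamp).prod.comp j)
          = C • innerSL ℂ (tmul (u k) (adjoint Q ξ)) from fun w => congr($this w)
      refine ContinuousLinearMap.ext_on
        (Submodule.dense_iff_topologicalClosure_eq_top.mpr hdenseE) ?_
      rintro _ ⟨⟨a, η⟩, rfl⟩
      simp only [comp_apply, innerSL_apply_apply, smul_apply, smul_eq_mul, hj, ih htnd, hQ,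
        Finset.prod_inner_update_right (by simpa using hkt : k ∈ Finset.univ.filter (· ∉ t)),
        hfilter, htmul, adjoint_inner_left]
      ring
    simp only [List.map_append, List.map_singleton, List.prod_append, List.prod_singleton,
      mul_apply_eq_comp]
    rw [(hAamp k).apply_eq htmul hdenseE htmuln hdenseK htmulF hdenseF hj, hPj, ← hopAtE,
      adjoint_inner_left]

theorem opAt_list_prod_ampliation [CompleteSpace H] [CompleteSpace F]
    (htmul : ∀ (u v : h) (ξ ζ : H), ⟪tmul u ξ, tmul v ζ⟫ = ⟪u, v⟫ * ⟪ξ, ζ⟫)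
    (hdenseE : (Submodule.span ℂ (Set.range fun p : h × H => tmul p.1 p.2)).topologicalClosure = ⊤)
    {opAtE : (E →L[ℂ] E) → h → h → (H →L[ℂ] H)}
    (hopAtE : ∀ (T : E →L[ℂ] E) (u v : h) (ξ₁ ξ₂ : H),
      ⟪ξ₁, opAtE T u v ξ₂⟫ = ⟪tmul u ξ₁, T (tmul v ξ₂)⟫)
    (htmuln : ∀ u v : Fin n → h, ⟪tmuln u, tmuln v⟫ = ∏ i, ⟪u i, v i⟫)
    (hdenseK : (Submodule.span ℂ (Set.range tmuln)).topologicalClosure = ⊤)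
    (htmulF : ∀ (x y : K) (ξ ζ : H), ⟪tmulF x ξ, tmulF y ζ⟫ = ⟪x, y⟫ * ⟪ξ, ζ⟫)
    (hdenseF : (Submodule.span ℂ (Set.range fun p : K × H => tmulF p.1 p.2)).topologicalClosure = ⊤)
    {opAtF : (F →L[ℂ] F) → K → K → (H →L[ℂ] H)}
    (hopAtF : ∀ (T : F →L[ℂ] F) (x y : K) (ξ₁ ξ₂ : H),
      ⟪ξ₁, opAtF T x y ξ₂⟫ = ⟪tmulF x ξ₁, T (tmulF y ξ₂)⟫)
    {B : Fin n → E →L[ℂ] E} {Aamp : Fin n → F →L[ℂ] F}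
    (hAamp : ∀ k, IsAmpliationAt tmul tmuln tmulF k (B k) (Aamp k))
    {t : List (Fin n)} (ht : t.Nodup) (u v : Fin n → h) :
    opAtF (t.map Aamp).prod (tmuln u) (tmuln v)
      = (∏ i ∈ Finset.univ.filter (· ∉ t), ⟪u i, v i⟫)
        • (t.map fun k => opAtE (B k) (u k) (v k)).prod := by
  ext ζ
  refine ext_inner_left ℂ fun ξ => ?_
  rw [hopAtF,
    inner_list_prod_ampliation htmul hdenseE hopAtE htmuln hdenseK htmulF hdenseF hAamp ht,
    smul_apply, inner_smul_right]

end Ampliation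

/- `E`, `K`, `F` stand for `h ⊗ H`, `h^{⊗n}`, `h^{⊗n} ⊗ H`, and `opAtE T u v`, `opAtF T x y` for
`T(u,v)`; `ε k = true` means `ε_k = 1`. -/
theorem stmt5_general
    {h H E K F : Type*}
    [NormedAddCommGroup h] [InnerProductSpace ℂ h]
    [NormedAddCommGroup H] [InnerProductSpace ℂ H] [CompleteSpace H]
    [NormedAddCommGroup E] [InnerProductSpace ℂ E] [CompleteSpace E]
    [NormedAddCommGroup K] [InnerProductSpace ℂ K]
    [NormedAddCommGroup F] [InnerProductSpace ℂ F] [CompleteSpace F]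
    (tmul : h →ₗ[ℂ] H →ₗ[ℂ] E)
    (htmul : ∀ (u v : h) (ξ ζ : H), ⟪tmul u ξ, tmul v ζ⟫ = ⟪u, v⟫ * ⟪ξ, ζ⟫)
    (hdenseE : (Submodule.span ℂ (Set.range fun p : h × H => tmul p.1 p.2)).topologicalClosure = ⊤)
    (opAtE : (E →L[ℂ] E) → h → h → (H →L[ℂ] H))
    (hopAtE : ∀ (T : E →L[ℂ] E) (u v : h) (ξ₁ ξ₂ : H),
      ⟪ξ₁, opAtE T u v ξ₂⟫ = ⟪tmul u ξ₁, T (tmul v ξ₂)⟫)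
    (n : ℕ)
    (tmuln : (Fin n → h) → K)
    (htmuln : ∀ u v : Fin n → h, ⟪tmuln u, tmuln v⟫ = ∏ i, ⟪u i, v i⟫)
    (hdenseK : (Submodule.span ℂ (Set.range tmuln)).topologicalClosure = ⊤)
    (tmulF : K →ₗ[ℂ] H →ₗ[ℂ] F)
    (htmulF : ∀ (x y : K) (ξ ζ : H), ⟪tmulF x ξ, tmulF y ζ⟫ = ⟪x, y⟫ * ⟪ξ, ζ⟫)
    (hdenseF : (Submodule.span ℂ (Set.range fun p : K × H => tmulF p.1 p.2)).topologicalClosure = ⊤)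
    (opAtF : (F →L[ℂ] F) → K → K → (H →L[ℂ] H))
    (hopAtF : ∀ (T : F →L[ℂ] F) (x y : K) (ξ₁ ξ₂ : H),
      ⟪ξ₁, opAtF T x y ξ₂⟫ = ⟪tmulF x ξ₁, T (tmulF y ξ₂)⟫)
    (A : E →L[ℂ] E) (ε : Fin n → Bool)
    (Aamp : Fin n → (F →L[ℂ] F))
    (hAamp : ∀ (k : Fin n) (x y : Fin n → h) (ξ ζ : H),
      ⟪tmulF (tmuln x) ξ, Aamp k (tmulF (tmuln y) ζ)⟫
        = ⟪tmul (x k) ξ, (if ε k then adjoint A else A) (tmul (y k) ζ)⟫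
          * ∏ i ∈ Finset.univ.erase k, ⟪x i, y i⟫)
    (m : ℕ) (hm : m ≤ n)
    (u v : Fin n → h) :
    opAtF ((List.ofFn fun k : Fin m => Aamp (Fin.castLE hm k)).prod) (tmuln u) (tmuln v)
      = (∏ i ∈ Finset.univ.filter (fun i : Fin n => m ≤ (i : ℕ)), ⟪u i, v i⟫) •
          (List.ofFn fun k : Fin m =>
            opAtE (if ε (Fin.castLE hm k) then adjoint A else A)
              (u (Fin.castLE hm k)) (v (Fin.castLE hm k))).prod ∧
    opAtF ((List.ofFn Aamp).prod) (tmuln u) (tmuln v)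
      = (List.ofFn fun k : Fin n =>
          opAtE (if ε k then adjoint A else A) (u k) (v k)).prod := by
  have key := fun (t : List (Fin n)) (ht : t.Nodup) =>
    opAt_list_prod_ampliation htmul hdenseE hopAtE htmuln hdenseK htmulF hdenseF hopAtF
      (B := fun k => if ε k then adjoint A else A) hAamp ht u v
  constructor
  · have hprefix : Finset.univ.filter (· ∉ List.ofFn (Fin.castLE hm))
        = Finset.univ.filter (fun i : Fin n => m ≤ (i : ℕ)) :=
      Finset.filter_congr fun i _ => by
        rw [List.mem_ofFn', Fin.range_castLE, Set.mem_ofPred_eq, not_lt]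
    rw [← hprefix]
    simpa only [List.map_ofFn, Function.comp_def] using
      key _ (List.nodup_ofFn.mpr (Fin.castLE_injective hm))
  · simpa [← List.ofFn_eq_map] using key _ (List.nodup_finRange n)

theorem stmt5
    {h H E K F : Type*}
    [NormedAddCommGroup h] [InnerProductSpace ℂ h] [CompleteSpace h]
    [TopologicalSpace.SeparableSpace h]
    [NormedAddCommGroup H] [InnerProductSpace ℂ H] [CompleteSpace H]
    [TopologicalSpace.SeparableSpace H]
    [NormedAddCommGroup E] [InnerProductSpace ℂ E] [CompleteSpace E]
    [NormedAddCommGroup K] [InnerProductSpace ℂ K] [CompleteSpace K]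
    [NormedAddCommGroup F] [InnerProductSpace ℂ F] [CompleteSpace F]
    (tmul : h →ₗ[ℂ] H →ₗ[ℂ] E)
    (htmul : ∀ (u v : h) (ξ ζ : H), ⟪tmul u ξ, tmul v ζ⟫ = ⟪u, v⟫ * ⟪ξ, ζ⟫)
    (hdenseE : (Submodule.span ℂ (Set.range fun p : h × H => tmul p.1 p.2)).topologicalClosure = ⊤)
    (opAtE : (E →L[ℂ] E) → h → h → (H →L[ℂ] H))
    (hopAtE : ∀ (T : E →L[ℂ] E) (u v : h) (ξ₁ ξ₂ : H),
      ⟪ξ₁, opAtE T u v ξ₂⟫ = ⟪tmul u ξ₁, T (tmul v ξ₂)⟫)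
    (n : ℕ) (hn : 1 ≤ n)
    (tmuln : (Fin n → h) → K)
    (htmuln : ∀ u v : Fin n → h, ⟪tmuln u, tmuln v⟫ = ∏ i, ⟪u i, v i⟫)
    (hdenseK : (Submodule.span ℂ (Set.range tmuln)).topologicalClosure = ⊤)
    (tmulF : K →ₗ[ℂ] H →ₗ[ℂ] F)
    (htmulF : ∀ (x y : K) (ξ ζ : H), ⟪tmulF x ξ, tmulF y ζ⟫ = ⟪x, y⟫ * ⟪ξ, ζ⟫)
    (hdenseF : (Submodule.span ℂ (Set.range fun p : K × H => tmulF p.1 p.2)).topologicalClosure = ⊤)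
    (opAtF : (F →L[ℂ] F) → K → K → (H →L[ℂ] H))
    (hopAtF : ∀ (T : F →L[ℂ] F) (x y : K) (ξ₁ ξ₂ : H),
      ⟪ξ₁, opAtF T x y ξ₂⟫ = ⟪tmulF x ξ₁, T (tmulF y ξ₂)⟫)
    (A : E →L[ℂ] E) (ε : Fin n → Bool)
    (Aamp : Fin n → (F →L[ℂ] F))
    (hAamp : ∀ (k : Fin n) (x y : Fin n → h) (ξ ζ : H),
      ⟪tmulF (tmuln x) ξ, Aamp k (tmulF (tmuln y) ζ)⟫
        = ⟪tmul (x k) ξ, (if ε k then adjoint A else A) (tmul (y k) ζ)⟫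
          * ∏ i ∈ Finset.univ.erase k, ⟪x i, y i⟫)
    (m : ℕ) (hm1 : 1 ≤ m) (hm : m ≤ n)
    (u v : Fin n → h) :
    opAtF ((List.ofFn fun k : Fin m => Aamp (Fin.castLE hm k)).prod) (tmuln u) (tmuln v)
      = (∏ i ∈ Finset.univ.filter (fun i : Fin n => m ≤ (i : ℕ)), ⟪u i, v i⟫) •
          (List.ofFn fun k : Fin m =>
            opAtE (if ε (Fin.castLE hm k) then adjoint A else A)
              (u (Fin.castLE hm k)) (v (Fin.castLE hm k))).prod ∧
    opAtF ((List.ofFn Aamp).prod) (tmuln u) (tmuln v)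
      = (List.ofFn fun k : Fin n =>
          opAtE (if ε k then adjoint A else A) (u k) (v k)).prod :=
  stmt5_general tmul htmul hdenseE opAtE hopAtE n tmuln htmuln hdenseK tmulF htmulF hdenseF opAtF
    hopAtF A ε Aamp hAamp m hm u v
end

section
/- Let U be a unitary operator on K⊗H, Ω a unit vector in H, and define the bounded operator T on K by ⟨φ, Tψ⟩ = ⟨φ⊗Ω, U(ψ⊗Ω)⟩ for all φ, ψ ∈ K. Then for every φ ∈ K: ‖(U − 1)(φ⊗Ω)‖² = ⟨(1 − T)φ, φ⟩ + ⟨φ, (1 − T)φ⟩, and consequently ‖(U − 1)(φ⊗Ω)‖² ≤ 2‖1 − T‖·‖φ‖². -/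
/-!
Since `U` is an isometry and `Ω` is a unit vector, `x = φ⊗Ω` and `U x` both have norm `‖φ‖`,
so expanding `‖U x - x‖²` leaves only the cross terms `⟪x, U x⟫ = ⟪φ, T φ⟫` and their conjugates.
Taking real parts and bounding `re ⟪φ, (1 - T) φ⟫` by `‖1 - T‖ ‖φ‖²` gives the inequality.
-/

open scoped InnerProductSpace ComplexInnerProductSpace
open ContinuousLinearMap RCLike

section InnerProductSpace

variable {𝕜 E : Type*} [RCLike 𝕜] [NormedAddCommGroup E] [InnerProductSpace 𝕜 E]

theorem norm_sub_sq_eq_of_norm_eq {x y : E} (h : ‖y‖ = ‖x‖) :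
    (‖y - x‖ : 𝕜) ^ 2 = (⟪x, x⟫_𝕜 - ⟪y, x⟫_𝕜) + (⟪x, x⟫_𝕜 - ⟪x, y⟫_𝕜) := by
  have hyy : ⟪y, y⟫_𝕜 = ⟪x, x⟫_𝕜 := by
    rw [inner_self_eq_norm_sq_to_K, inner_self_eq_norm_sq_to_K, h]
  rw [← inner_self_eq_norm_sq_to_K, inner_sub_left, inner_sub_right, inner_sub_right, hyy]
  ring

theorem re_inner_apply_add_inner_apply_le (A : E →L[𝕜] E) (x : E) :
    re (⟪A x, x⟫_𝕜 + ⟪x, A x⟫_𝕜) ≤ 2 * ‖A‖ * ‖x‖ ^ 2 := by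
  have hle : re ⟪x, A x⟫_𝕜 ≤ ‖A‖ * ‖x‖ ^ 2 :=
    calc re ⟪x, A x⟫_𝕜 ≤ ‖x‖ * ‖A x‖ := re_inner_le_norm _ _
      _ ≤ ‖x‖ * (‖A‖ * ‖x‖) := by gcongr; exact A.le_opNorm x
      _ = ‖A‖ * ‖x‖ ^ 2 := by ring
  rw [map_add, inner_re_symm]
  linarith

end InnerProductSpace

theorem inner_tmul_of_norm_eq_one {𝕜 K H E : Type*} [RCLike 𝕜]
    [NormedAddCommGroup K] [InnerProductSpace 𝕜 K]
    [NormedAddCommGroup H] [InnerProductSpace 𝕜 H]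
    [NormedAddCommGroup E] [InnerProductSpace 𝕜 E]
    (tmul : K →ₗ[𝕜] H →ₗ[𝕜] E)
    (htmul : ∀ (u v : K) (ξ ζ : H), ⟪tmul u ξ, tmul v ζ⟫_𝕜 = ⟪u, v⟫_𝕜 * ⟪ξ, ζ⟫_𝕜)
    {Ω : H} (hΩ : ‖Ω‖ = 1) (u v : K) :
    ⟪tmul u Ω, tmul v Ω⟫_𝕜 = ⟪u, v⟫_𝕜 := by
  rw [htmul, inner_self_eq_norm_sq_to_K, hΩ]
  simp

theorem stmt9_general
    {K H E : Type*}
    [NormedAddCommGroup K] [InnerProductSpace ℂ K]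
    [NormedAddCommGroup H] [InnerProductSpace ℂ H]
    [NormedAddCommGroup E] [InnerProductSpace ℂ E] [CompleteSpace E]
    (tmul : K →ₗ[ℂ] H →ₗ[ℂ] E)
    (htmul : ∀ (u v : K) (ξ ζ : H), ⟪tmul u ξ, tmul v ζ⟫ = ⟪u, v⟫ * ⟪ξ, ζ⟫)
    (U : E →L[ℂ] E)
    (hU : adjoint U * U = 1 ∧ U * adjoint U = 1)
    (Ω : H) (hΩ : ‖Ω‖ = 1)
    (T : K →L[ℂ] K)
    (hT : ∀ φ ψ : K, ⟪φ, T ψ⟫ = ⟪tmul φ Ω, U (tmul ψ Ω)⟫)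
    (φ : K) :
    ((‖(U - 1) (tmul φ Ω)‖ : ℂ) ^ 2 = ⟪(1 - T) φ, φ⟫ + ⟪φ, (1 - T) φ⟫) ∧
    ‖(U - 1) (tmul φ Ω)‖ ^ 2 ≤ 2 * ‖(1 : K →L[ℂ] K) - T‖ * ‖φ‖ ^ 2 := by
  set x := tmul φ Ω
  have hUx : ‖U x‖ = ‖x‖ := (norm_map_iff_adjoint_comp_self U).mpr hU.1 x
  have hxx : ⟪x, x⟫ = ⟪φ, φ⟫ := inner_tmul_of_norm_eq_one tmul htmul hΩ φ φ
  have hxUx : ⟪x, U x⟫ = ⟪φ, T φ⟫ := (hT φ φ).symm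
  have hUxx : ⟪U x, x⟫ = ⟪T φ, φ⟫ := by rw [← inner_conj_symm, hxUx, inner_conj_symm]
  have hnorm_sq : (‖(U - 1) x‖ : ℂ) ^ 2 = ⟪(1 - T) φ, φ⟫ + ⟪φ, (1 - T) φ⟫ := by
    convert norm_sub_sq_eq_of_norm_eq (𝕜 := ℂ) hUx using 1
    · rw [sub_apply, one_apply_eq_self]; rfl
    rw [hxx, hxUx, hUxx, sub_apply, one_apply_eq_self, inner_sub_left, inner_sub_right]
  refine ⟨hnorm_sq, ?_⟩
  calc ‖(U - 1) x‖ ^ 2 = re ((‖(U - 1) x‖ : ℂ) ^ 2) := by norm_cast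
    _ ≤ 2 * ‖(1 : K →L[ℂ] K) - T‖ * ‖φ‖ ^ 2 := by
      rw [hnorm_sq]; exact re_inner_apply_add_inner_apply_le _ φ

theorem stmt9
    {K H E : Type*}
    [NormedAddCommGroup K] [InnerProductSpace ℂ K] [CompleteSpace K]
    [TopologicalSpace.SeparableSpace K]
    [NormedAddCommGroup H] [InnerProductSpace ℂ H] [CompleteSpace H]
    [TopologicalSpace.SeparableSpace H]
    [NormedAddCommGroup E] [InnerProductSpace ℂ E] [CompleteSpace E]
    (tmul : K →ₗ[ℂ] H →ₗ[ℂ] E)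
    (htmul : ∀ (u v : K) (ξ ζ : H), ⟪tmul u ξ, tmul v ζ⟫ = ⟪u, v⟫ * ⟪ξ, ζ⟫)
    (hdense : (Submodule.span ℂ (Set.range fun p : K × H => tmul p.1 p.2)).topologicalClosure = ⊤)
    (U : E →L[ℂ] E)
    (hU : adjoint U * U = 1 ∧ U * adjoint U = 1)
    (Ω : H) (hΩ : ‖Ω‖ = 1)
    (T : K →L[ℂ] K)
    (hT : ∀ φ ψ : K, ⟪φ, T ψ⟫ = ⟪tmul φ Ω, U (tmul ψ Ω)⟫)
    (φ : K) :
    ((‖(U - 1) (tmul φ Ω)‖ : ℂ) ^ 2 = ⟪(1 - T) φ, φ⟫ + ⟪φ, (1 - T) φ⟫) ∧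
    ‖(U - 1) (tmul φ Ω)‖ ^ 2 ≤ 2 * ‖(1 : K →L[ℂ] K) - T‖ * ‖φ‖ ^ 2 :=
  stmt9_general tmul htmul U hU Ω hΩ T hT φ
end

section
/- Assume each U_t is unitary and Assumption C holds. Then for all u, v, p, w ∈ h and all ε, ε′ ∈ {0,1}: lim_{t→0} (1/t)·‖(U_t^{(ε)} − 1)(u,v)·(U_t^{(ε′)} − 1)(p,w)·Ω‖² = 0. -/
/-!
Write `X = V - 1` with `V = U_t^{(ε)}` an isometry. Then `X* X = -(X + X*)`, so `‖X η‖²` is minus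
the real part of `⟨η, X η⟩ + ⟨η, X* η⟩`. For `ξ = (U_t^{(ε')} - 1)(p,w) Ω` we have
`‖X(u,v) ξ‖ ≤ ‖u‖ ‖X (v ⊗ ξ)‖`, and with `η = v ⊗ ξ` both matrix elements are vacuum expectations of
products of three increments, which are `o(t)` by Assumption C.
-/

open scoped ComplexInnerProductSpace
open ContinuousLinearMap Filter

section Isometry

variable {E : Type*} [NormedAddCommGroup E] [InnerProductSpace ℂ E] [CompleteSpace E]

theorem adjoint_sub_one_mul_sub_one {V : E →L[ℂ] E} (hV : adjoint V * V = 1) :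
    adjoint (V - 1) * (V - 1) = -((V - 1) + adjoint (V - 1)) := by
  rw [← star_eq_adjoint, star_sub, star_one, sub_mul, mul_sub, mul_sub, star_eq_adjoint, hV]
  noncomm_ring

theorem norm_sub_one_apply_sq {V : E →L[ℂ] E} (hV : adjoint V * V = 1) (η : E) :
    ‖(V - 1) η‖ ^ 2 = -(⟪η, (V - 1) η⟫ + ⟪η, adjoint (V - 1) η⟫).re := by
  rw [apply_norm_sq_eq_inner_adjoint_right, ← mul_def, adjoint_sub_one_mul_sub_one hV]
  simp only [neg_apply, add_apply, inner_neg_right, inner_add_right]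
  rfl

theorem adjoint_ite_adjoint_sub_one (δ : Bool) (A : E →L[ℂ] E) :
    adjoint ((if δ then adjoint A else A) - 1) = (if !δ then adjoint A else A) - 1 := by
  rw [← star_eq_adjoint, star_sub, star_one]
  cases δ <;> simp [star_eq_adjoint]

theorem adjoint_ite_adjoint_mul_self (δ : Bool) {A : E →L[ℂ] E} (hA : adjoint A * A = 1)
    (hA' : A * adjoint A = 1) :
    adjoint (if δ then adjoint A else A) * (if δ then adjoint A else A) = 1 := by
  cases δ <;> simpa

end Isometry

section PartialMatrixElements

variable {h H E : Type*}
  [NormedAddCommGroup h] [InnerProductSpace ℂ h]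
  [NormedAddCommGroup H] [InnerProductSpace ℂ H]
  [NormedAddCommGroup E] [InnerProductSpace ℂ E]
  (tmul : h →ₗ[ℂ] H →ₗ[ℂ] E) (opAt : (E →L[ℂ] E) → h → h → (H →L[ℂ] H))

theorem norm_tmul_eq_mul_norm
    (htmul : ∀ (u v : h) (ξ ζ : H), ⟪tmul u ξ, tmul v ζ⟫ = ⟪u, v⟫ * ⟪ξ, ζ⟫) (u : h) (ξ : H) :
    ‖tmul u ξ‖ = ‖u‖ * ‖ξ‖ := by
  have hsq := htmul u u ξ ξ
  simp only [inner_self_eq_norm_sq_to_K] at hsq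
  rw [← mul_pow] at hsq
  exact (pow_left_inj₀ (norm_nonneg _) (by positivity) two_ne_zero).mp (mod_cast hsq)

theorem norm_opAt_apply_le
    (htmul : ∀ (u v : h) (ξ ζ : H), ⟪tmul u ξ, tmul v ζ⟫ = ⟪u, v⟫ * ⟪ξ, ζ⟫)
    (hopAt : ∀ (A : E →L[ℂ] E) (u v : h) (ξ₁ ξ₂ : H),
      ⟪ξ₁, opAt A u v ξ₂⟫ = ⟪tmul u ξ₁, A (tmul v ξ₂)⟫)
    (A : E →L[ℂ] E) (u v : h) (ξ : H) :
    ‖opAt A u v ξ‖ ≤ ‖u‖ * ‖A (tmul v ξ)‖ := by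
  set η := opAt A u v ξ
  have hsq : ‖η‖ * ‖η‖ ≤ ‖u‖ * ‖A (tmul v ξ)‖ * ‖η‖ := calc
    ‖η‖ * ‖η‖ = (⟪η, η⟫).re := by rw [← sq, ← inner_self_eq_norm_sq (𝕜 := ℂ)]; rfl
    _ = (⟪tmul u η, A (tmul v ξ)⟫).re := by rw [hopAt]
    _ ≤ ‖⟪tmul u η, A (tmul v ξ)⟫‖ := Complex.re_le_norm _
    _ ≤ ‖tmul u η‖ * ‖A (tmul v ξ)‖ := norm_inner_le_norm _ _
    _ = ‖u‖ * ‖A (tmul v ξ)‖ * ‖η‖ := by rw [norm_tmul_eq_mul_norm tmul htmul]; ring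
  rcases (norm_nonneg η).eq_or_lt with hη | hη
  · rw [← hη]; positivity
  · exact le_of_mul_le_mul_right hsq hη

variable [CompleteSpace E]

theorem inner_opAt_left
    (hopAt : ∀ (A : E →L[ℂ] E) (u v : h) (ξ₁ ξ₂ : H),
      ⟪ξ₁, opAt A u v ξ₂⟫ = ⟪tmul u ξ₁, A (tmul v ξ₂)⟫)
    (A : E →L[ℂ] E) (u v : h) (ξ ζ : H) :
    ⟪opAt A u v ξ, ζ⟫ = ⟪ξ, opAt (adjoint A) v u ζ⟫ := by
  rw [← inner_conj_symm, hopAt, hopAt, inner_conj_symm, adjoint_inner_right]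

theorem inner_tmul_opAt_apply
    (hopAt : ∀ (A : E →L[ℂ] E) (u v : h) (ξ₁ ξ₂ : H),
      ⟪ξ₁, opAt A u v ξ₂⟫ = ⟪tmul u ξ₁, A (tmul v ξ₂)⟫)
    (Y Z : E →L[ℂ] E) (v p w : h) (Ω : H) :
    ⟪tmul v (opAt Y p w Ω), Z (tmul v (opAt Y p w Ω))⟫
      = ⟪Ω, (opAt (adjoint Y) w p * opAt Z v v * opAt Y p w) Ω⟫ := by
  rw [← hopAt, inner_opAt_left tmul opAt hopAt]
  rfl

theorem norm_opAt_sub_one_mul_opAt_apply_sq_le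
    (htmul : ∀ (u v : h) (ξ ζ : H), ⟪tmul u ξ, tmul v ζ⟫ = ⟪u, v⟫ * ⟪ξ, ζ⟫)
    (hopAt : ∀ (A : E →L[ℂ] E) (u v : h) (ξ₁ ξ₂ : H),
      ⟪ξ₁, opAt A u v ξ₂⟫ = ⟪tmul u ξ₁, A (tmul v ξ₂)⟫)
    {V : E →L[ℂ] E} (hV : adjoint V * V = 1) (Y : E →L[ℂ] E) (u v p w : h) (Ω : H) :
    ‖(opAt (V - 1) u v * opAt Y p w) Ω‖ ^ 2 ≤ ‖u‖ ^ 2 *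
      -(⟪Ω, (opAt (adjoint Y) w p * opAt (V - 1) v v * opAt Y p w) Ω⟫ +
        ⟪Ω, (opAt (adjoint Y) w p * opAt (adjoint (V - 1)) v v * opAt Y p w) Ω⟫).re := calc
  _ ≤ (‖u‖ * ‖(V - 1) (tmul v (opAt Y p w Ω))‖) ^ 2 :=
    pow_le_pow_left₀ (norm_nonneg _) (norm_opAt_apply_le tmul opAt htmul hopAt _ _ _ _) 2
  _ = _ := by
    rw [mul_pow, norm_sub_one_apply_sq hV, inner_tmul_opAt_apply tmul opAt hopAt,
      inner_tmul_opAt_apply tmul opAt hopAt]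

end PartialMatrixElements

theorem stmt15_general
    {h H E : Type*}
    [NormedAddCommGroup h] [InnerProductSpace ℂ h]
    [NormedAddCommGroup H] [InnerProductSpace ℂ H]
    [NormedAddCommGroup E] [InnerProductSpace ℂ E] [CompleteSpace E]
    (tmul : h →ₗ[ℂ] H →ₗ[ℂ] E)
    (htmul : ∀ (u v : h) (ξ ζ : H), ⟪tmul u ξ, tmul v ζ⟫ = ⟪u, v⟫ * ⟪ξ, ζ⟫)
    (opAt : (E →L[ℂ] E) → h → h → (H →L[ℂ] H))
    (hopAt : ∀ (A : E →L[ℂ] E) (u v : h) (ξ₁ ξ₂ : H),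
      ⟪ξ₁, opAt A u v ξ₂⟫ = ⟪tmul u ξ₁, A (tmul v ξ₂)⟫)
    (Ω : H)
    (U : ℝ → (E →L[ℂ] E))
    (hUunitary : ∀ t : ℝ, 0 ≤ t → adjoint (U t) * U t = 1 ∧ U t * adjoint (U t) = 1)
    -- (C) Gaussian condition
    (hC : ∀ (u₁ v₁ u₂ v₂ u₃ v₃ : h) (ε₁ ε₂ ε₃ : Bool),
      Tendsto (fun t : ℝ => (1 / t) *
          ⟪Ω, ((opAt ((if ε₁ then adjoint (U t) else U t) - 1) u₁ v₁) *
               (opAt ((if ε₂ then adjoint (U t) else U t) - 1) u₂ v₂) *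
               (opAt ((if ε₃ then adjoint (U t) else U t) - 1) u₃ v₃)) Ω⟫)
        (nhdsWithin 0 (Set.Ioi 0)) (nhds 0))
    (u v p w : h) (ε ε' : Bool) :
    Tendsto (fun t : ℝ => (1 / t) *
        ‖((opAt ((if ε then adjoint (U t) else U t) - 1) u v) *
          (opAt ((if ε' then adjoint (U t) else U t) - 1) p w)) Ω‖ ^ 2)
      (nhdsWithin 0 (Set.Ioi 0)) (nhds 0) := by
  have hg := ((Complex.continuous_re.tendsto _).comp
    ((hC w p v v p w (!ε') ε ε').add (hC w p v v p w (!ε') (!ε) ε')).neg).const_mul (‖u‖ ^ 2)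
  simp only [add_zero, neg_zero, Complex.zero_re, mul_zero] at hg
  refine squeeze_zero' ?_ ?_ hg
  · filter_upwards [self_mem_nhdsWithin] with t (ht : 0 < t)
    positivity
  · filter_upwards [self_mem_nhdsWithin] with t (ht : 0 < t)
    have hbound := norm_opAt_sub_one_mul_opAt_apply_sq_le tmul opAt htmul hopAt
      (adjoint_ite_adjoint_mul_self ε (hUunitary t ht.le).1 (hUunitary t ht.le).2)
      ((if ε' then adjoint (U t) else U t) - 1) u v p w Ω
    rw [adjoint_ite_adjoint_sub_one, adjoint_ite_adjoint_sub_one] at hbound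
    calc _ ≤ 1 / t * (‖u‖ ^ 2 * -(_ + _ : ℂ).re) := by gcongr
      _ = _ := by
        simp only [Function.comp_apply, ← mul_add, ← mul_neg, one_div, ← Complex.ofReal_inv,
          Complex.re_ofReal_mul, Complex.neg_re]
        ring

theorem stmt15
    {h H E : Type*}
    [NormedAddCommGroup h] [InnerProductSpace ℂ h] [CompleteSpace h]
    [TopologicalSpace.SeparableSpace h]
    [NormedAddCommGroup H] [InnerProductSpace ℂ H] [CompleteSpace H]
    [TopologicalSpace.SeparableSpace H]
    [NormedAddCommGroup E] [InnerProductSpace ℂ E] [CompleteSpace E]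
    (tmul : h →ₗ[ℂ] H →ₗ[ℂ] E)
    (htmul : ∀ (u v : h) (ξ ζ : H), ⟪tmul u ξ, tmul v ζ⟫ = ⟪u, v⟫ * ⟪ξ, ζ⟫)
    (hdense : (Submodule.span ℂ (Set.range fun p : h × H => tmul p.1 p.2)).topologicalClosure = ⊤)
    (opAt : (E →L[ℂ] E) → h → h → (H →L[ℂ] H))
    (hopAt : ∀ (A : E →L[ℂ] E) (u v : h) (ξ₁ ξ₂ : H),
      ⟪ξ₁, opAt A u v ξ₂⟫ = ⟪tmul u ξ₁, A (tmul v ξ₂)⟫)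
    (Ω : H) (hΩ : ‖Ω‖ = 1)
    (U : ℝ → (E →L[ℂ] E))
    (hUunitary : ∀ t : ℝ, 0 ≤ t → adjoint (U t) * U t = 1 ∧ U t * adjoint (U t) = 1)
    -- (C) Gaussian condition
    (hC : ∀ (u₁ v₁ u₂ v₂ u₃ v₃ : h) (ε₁ ε₂ ε₃ : Bool),
      Tendsto (fun t : ℝ => (1 / t) *
          ⟪Ω, ((opAt ((if ε₁ then adjoint (U t) else U t) - 1) u₁ v₁) *
               (opAt ((if ε₂ then adjoint (U t) else U t) - 1) u₂ v₂) *
               (opAt ((if ε₃ then adjoint (U t) else U t) - 1) u₃ v₃)) Ω⟫)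
        (nhdsWithin 0 (Set.Ioi 0)) (nhds 0))
    (u v p w : h) (ε ε' : Bool) :
    Tendsto (fun t : ℝ => (1 / t) *
        ‖((opAt ((if ε then adjoint (U t) else U t) - 1) u v) *
          (opAt ((if ε' then adjoint (U t) else U t) - 1) p w)) Ω‖ ^ 2)
      (nhdsWithin 0 (Set.Ioi 0)) (nhds 0) :=
  stmt15_general tmul htmul opAt hopAt Ω U hUunitary hC u v p w ε ε'
end

section
/- Let h be a complex separable Hilbert space, G a bounded operator on h, and (L_j)_{j≥1} a sequence of bounded operators on h such that for every u ∈ h the series Σ_j ‖L_j u‖² converges and Σ_j ‖L_j u‖² = −⟨u, Gu⟩ − ⟨Gu, u⟩. Then Σ_j L_j* L_j converges strongly to a bounded positive operator with ‖Σ_j L_j* L_j‖ ≤ 2‖G‖, and the operator H := −i·(G + ½·Σ_j L_j* L_j) is a bounded self-adjoint operator on h; equivalently G = iH − ½·Σ_j L_j* L_j with H self-adjoint. -/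
/-!
Put `S := -(G + G†)`. The hypothesis says that the quadratic form of the self-adjoint operator `S`
is `u ↦ ∑ j, ‖L j u‖ ^ 2`, so the remainders `S - ∑_{j ∈ s} L j† L j` are positive and bounded
above by `S`, while their quadratic forms tend to `0`. For a positive operator `P` one has
`‖P u‖ ^ 2 ≤ ‖P‖ ⟪u, P u⟫`, so the remainders tend to `0` strongly. The operator
`-i (G + S / 2) = -i (G - G†) / 2` is the imaginary part of `G`, hence self-adjoint.
-/

open scoped ComplexInnerProductSpace
open ContinuousLinearMap
open Filter Topology RCLike

namespace ContinuousLinearMap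

variable {E : Type*} [NormedAddCommGroup E] [InnerProductSpace ℂ E] [CompleteSpace E] {ι : Type*}

/-- Write `P = √P * √P`. -/
lemma norm_apply_sq_le_of_nonneg {P : E →L[ℂ] E} (hP : 0 ≤ P) (u : E) :
    ‖P u‖ ^ 2 ≤ ‖P‖ * re ⟪u, P u⟫ := by
  set R := CFC.sqrt P
  have hR : IsSelfAdjoint R := (CFC.sqrt_nonneg P).isSelfAdjoint
  have hRR : R * R = P := CFC.sqrt_mul_sqrt_self P
  have hnormR : ‖R‖ ^ 2 = ‖P‖ := by
    rw [sq, ← CStarRing.norm_star_mul_self, hR.star_eq, hRR]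
  have hnormRu : ‖R u‖ ^ 2 = re ⟪u, P u⟫ := by
    rw [← hRR, mul_apply_eq_comp, ← adjoint_inner_left, ← star_eq_adjoint, hR.star_eq,
      inner_self_eq_norm_sq]
  calc ‖P u‖ ^ 2 = ‖R (R u)‖ ^ 2 := by rw [← mul_apply_eq_comp, hRR]
    _ ≤ (‖R‖ * ‖R u‖) ^ 2 := by gcongr; exact R.le_opNorm _
    _ = ‖P‖ * re ⟪u, P u⟫ := by rw [mul_pow, hnormR, hnormRu]

lemma tendsto_apply_zero_of_re_inner {l : Filter ι} {D : ι → E →L[ℂ] E}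
    {S : E →L[ℂ] E} (hD : ∀ i, 0 ≤ D i) (hDS : ∀ i, D i ≤ S) (u : E)
    (h : Tendsto (fun i => re ⟪u, D i u⟫) l (𝓝 0)) :
    Tendsto (fun i => D i u) l (𝓝 0) := by
  have hsq : Tendsto (fun i => ‖D i u‖ ^ 2) l (𝓝 0) := by
    refine squeeze_zero (fun i => by positivity) (fun i => ?_) (by simpa using h.const_mul ‖S‖)
    calc ‖D i u‖ ^ 2 ≤ ‖D i‖ * re ⟪u, D i u⟫ := norm_apply_sq_le_of_nonneg (hD i) u
      _ ≤ ‖S‖ * re ⟪u, D i u⟫ := by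
        gcongr
        · exact ((nonneg_iff_isPositive _).mp (hD i)).re_inner_nonneg_right u
        · exact CStarAlgebra.norm_le_norm_of_nonneg_of_le (hD i) (hDS i)
  rw [tendsto_zero_iff_norm_tendsto_zero]
  simpa [Real.sqrt_sq (norm_nonneg _)] using hsq.sqrt

lemma re_inner_sum_adjoint_mul_self_apply (L : ι → E →L[ℂ] E) (s : Finset ι)
    (u : E) : re ⟪u, (∑ j ∈ s, adjoint (L j) * L j) u⟫ = ∑ j ∈ s, ‖L j u‖ ^ 2 := by
  simp [sum_apply, apply_norm_sq_eq_inner_adjoint_right, mul_def]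

lemma sum_adjoint_mul_self_nonneg (L : ι → E →L[ℂ] E) (s : Finset ι) :
    0 ≤ ∑ j ∈ s, adjoint (L j) * L j :=
  Finset.sum_nonneg fun j _ => by simpa only [star_eq_adjoint] using star_mul_self_nonneg (L j)

section SquareSum

variable {L : ι → E →L[ℂ] E} {S : E →L[ℂ] E}

lemma sum_adjoint_mul_self_le (hS : IsSelfAdjoint S)
    (hL : ∀ u, HasSum (fun j => ‖L j u‖ ^ 2) (re ⟪u, S u⟫)) (s : Finset ι) :
    ∑ j ∈ s, adjoint (L j) * L j ≤ S := by
  refine (le_def _ _).mpr ⟨?_, fun v => ?_⟩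
  · exact isSelfAdjoint_iff_isSymmetric.mp (hS.sub (sum_adjoint_mul_self_nonneg L s).isSelfAdjoint)
  · rw [reApplyInnerSelf_apply, inner_re_symm, sub_apply, inner_sub_right, map_sub,
      re_inner_sum_adjoint_mul_self_apply, sub_nonneg]
    exact sum_le_hasSum s (fun j _ => sq_nonneg _) (hL v)

theorem hasSum_adjoint_mul_self_apply (hS : IsSelfAdjoint S)
    (hL : ∀ u, HasSum (fun j => ‖L j u‖ ^ 2) (re ⟪u, S u⟫)) (u : E) :
    HasSum (fun j => (adjoint (L j) * L j) u) (S u) := by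
  set D : Finset ι → E →L[ℂ] E := fun s => S - ∑ j ∈ s, adjoint (L j) * L j
  have hD_nonneg (s : Finset ι) : 0 ≤ D s := sub_nonneg.mpr (sum_adjoint_mul_self_le hS hL s)
  have hD_le (s : Finset ι) : D s ≤ S := sub_le_self _ (sum_adjoint_mul_self_nonneg L s)
  have hD_tendsto : Tendsto (fun s => D s u) atTop (𝓝 0) := by
    refine tendsto_apply_zero_of_re_inner hD_nonneg hD_le u ?_
    simpa only [D, sub_apply, inner_sub_right, map_sub, re_inner_sum_adjoint_mul_self_apply,
      sub_self, SummationFilter.unconditional_filter] using (hL u).const_sub (re ⟪u, S u⟫)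
  simpa [D, HasSum, sum_apply] using (tendsto_const_nhds (x := S u)).sub hD_tendsto

end SquareSum

end ContinuousLinearMap

theorem stmt18_general
    {h : Type*}
    [NormedAddCommGroup h] [InnerProductSpace ℂ h] [CompleteSpace h]
    (G : h →L[ℂ] h) (L : ℕ → (h →L[ℂ] h))
    (hL : ∀ u : h, HasSum (fun j : ℕ => ((‖L j u‖ : ℂ) ^ 2)) (-⟪u, G u⟫ - ⟪G u, u⟫)) :
    ∃ S Hop : h →L[ℂ] h,
      (∀ u : h, HasSum (fun j : ℕ => (adjoint (L j) * L j) u) (S u)) ∧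
      S.IsPositive ∧ ‖S‖ ≤ 2 * ‖G‖ ∧
      Hop = (-Complex.I) • (G + (2⁻¹ : ℂ) • S) ∧
      IsSelfAdjoint Hop ∧
      G = Complex.I • Hop - (2⁻¹ : ℂ) • S := by
  set S : h →L[ℂ] h := -(G + adjoint G)
  have hS : IsSelfAdjoint S := by
    simpa only [S, star_eq_adjoint] using (IsSelfAdjoint.add_star_self G).neg
  have hL' (u : h) : HasSum (fun j => ‖L j u‖ ^ 2) (re ⟪u, S u⟫) := by
    have hSu : ⟪u, S u⟫ = -⟪u, G u⟫ - ⟪G u, u⟫ := by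
      simp only [S, neg_apply, add_apply, inner_neg_right, inner_add_right, adjoint_inner_right]
      ring
    simpa [hSu, ← Complex.ofReal_pow] using Complex.hasSum_re (hL u)
  refine ⟨S, _, hasSum_adjoint_mul_self_apply hS hL', ?_, ?_, rfl, ?_, ?_⟩
  · rw [← nonneg_iff_isPositive]
    simpa using sum_adjoint_mul_self_le hS hL' ∅
  · calc ‖S‖ ≤ ‖G‖ + ‖adjoint G‖ := (norm_neg _).trans_le (norm_add_le _ _)
      _ = 2 * ‖G‖ := by rw [LinearIsometryEquiv.norm_map]; ring
  · rw [IsSelfAdjoint, star_smul, star_add, star_smul, hS.star_eq, star_eq_adjoint]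
    simp only [S, star_neg, Complex.star_def, Complex.conj_I, neg_neg, star_inv₀, star_ofNat]
    module
  · rw [smul_smul, mul_neg, Complex.I_mul_I, neg_neg, one_smul, add_sub_cancel_right]

theorem stmt18
    {h : Type*}
    [NormedAddCommGroup h] [InnerProductSpace ℂ h] [CompleteSpace h]
    [TopologicalSpace.SeparableSpace h]
    (G : h →L[ℂ] h) (L : ℕ → (h →L[ℂ] h))
    (hL : ∀ u : h, HasSum (fun j : ℕ => ((‖L j u‖ : ℂ) ^ 2)) (-⟪u, G u⟫ - ⟪G u, u⟫)) :
    ∃ S Hop : h →L[ℂ] h,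
      (∀ u : h, HasSum (fun j : ℕ => (adjoint (L j) * L j) u) (S u)) ∧
      S.IsPositive ∧ ‖S‖ ≤ 2 * ‖G‖ ∧
      Hop = (-Complex.I) • (G + (2⁻¹ : ℂ) • S) ∧
      IsSelfAdjoint Hop ∧
      G = Complex.I • Hop - (2⁻¹ : ℂ) • S :=
  stmt18_general G L hL
end
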